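/- arXiv:2501.03244 — 7 statements merged into one kernel-verified Lean document; each statement's English description precedes it below -/
import Mathlib

section
/- The quartic polynomials f(x) = x²(x+3)² and g(x) = −3x³(x+2) over ℚ have the same multiset of finite critical values, namely {0, 0, 81/16}, but there is no affine transformation λ(x) = ax+b with a ≠ 0 such that f = g∘λ. -/
open Polynomial

/-!
The critical points of `f` are `0, -3, -3/2` and those of `g` are `0, 0, -3/2`; evaluating gives
`{0, 0, 81/16}` in both cases. They are nevertheless not affinely equivalent: `g` has the triple root
`0`, so `g ∘ λ` has a triple root at `λ⁻¹(0)`, whereas the roots of `f` are `0` and `-3`, each of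
multiplicity two.
-/

section

variable {R : Type*} [CommRing R] [IsDomain R]

lemma roots_eq_of_eq_C_mul_prod_X_sub_C {p : R[X]} {c : R} (hc : c ≠ 0) {s : Multiset R}
    (h : p = C c * (s.map fun a => X - C a).prod) : p.roots = s := by
  rw [h, roots_C_mul _ hc, roots_multiset_prod_X_sub_C]

lemma replicate_le_roots_of_X_sub_C_pow_dvd {p : R[X]} (hp : p ≠ 0) {x : R} {n : ℕ}
    (h : (X - C x) ^ n ∣ p) : Multiset.replicate n x ≤ p.roots := by
  rwa [← Multiset.prod_X_sub_C_dvd_iff_le_roots hp, Multiset.map_replicate,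
    Multiset.prod_replicate]

end

lemma X_sub_C_pow_dvd_comp_of_X_pow_dvd {K : Type*} [Field K] {p : K[X]} {n : ℕ}
    (h : X ^ n ∣ p) {a : K} (ha : a ≠ 0) (b : K) :
    (X - C (-b / a)) ^ n ∣ p.comp (C a * X + C b) := by
  obtain ⟨q, rfl⟩ := h
  have hlin : C a * X + C b = C a * (X - C (-b / a)) := by
    rw [mul_sub, ← C_mul, mul_div_cancel₀ _ ha, C_neg, sub_neg_eq_add]
  rw [mul_comp, X_pow_comp, hlin, mul_pow, mul_assoc]
  exact dvd_mul_of_dvd_right (dvd_mul_right _ _) _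

theorem stmt1 :
    let f : ℂ[X] := X ^ 2 * (X + 3) ^ 2
    let g : ℂ[X] := -3 * X ^ 3 * (X + 2)
    ((derivative f).roots.map (fun x => f.eval x)) = {0, 0, 81 / 16} ∧
    ((derivative g).roots.map (fun x => g.eval x)) = {0, 0, 81 / 16} ∧
    ¬ ∃ a b : ℂ, a ≠ 0 ∧ f = g.comp (C a * X + C b) := by
  intro f g
  have hf' : (derivative f).roots = {0, -3, -3 / 2} :=
    roots_eq_of_eq_C_mul_prod_X_sub_C (c := 4) (by norm_num) <| funext fun x => by
      simp [f, derivative_mul, derivative_pow]; ring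
  have hg' : (derivative g).roots = {0, 0, -3 / 2} :=
    roots_eq_of_eq_C_mul_prod_X_sub_C (c := -12) (by norm_num) <| funext fun x => by
      simp [g, derivative_mul, derivative_pow]; ring
  have hf : f.roots = {0, 0, -3, -3} :=
    roots_eq_of_eq_C_mul_prod_X_sub_C (c := 1) one_ne_zero <| funext fun x => by
      simp [f]; ring
  refine ⟨?_, ?_, ?_⟩
  · rw [hf']; norm_num [f]
  · rw [hg']; norm_num [g]
  rintro ⟨a, b, ha, hfg⟩
  have hg : X ^ 3 ∣ g := ⟨-3 * (X + 2), by simp only [g]; ring⟩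
  have hf0 : f ≠ 0 := fun h => by simp [h] at hf
  have htriple := replicate_le_roots_of_X_sub_C_pow_dvd hf0
    (hfg ▸ X_sub_C_pow_dvd_comp_of_X_pow_dvd hg ha b)
  have hcount := Multiset.count_le_of_le (-b / a) htriple
  rw [hf] at hcount
  simp only [Multiset.insert_eq_cons, Multiset.count_cons, Multiset.count_singleton,
    Multiset.count_replicate_self] at hcount
  split_ifs at hcount with h0 h3 <;> first | omega | norm_num [h0] at h3
end

section
/- There is no complex quartic polynomial f with distinct finite critical values {0, 1, −1} and a complex number b and primitive 8th root of unity ζ₈ such that −f(x) = f(ζ₈ x + b) identically. Consequently, the stabilizer in the affine group of the topological type of such f under the outer action is trivial, restricted to the map z ↦ −z. -/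
open Polynomial

lemma coeff_comp_C_mul_X (p : ℂ[X]) (c : ℂ) (n : ℕ) :
    (p.comp (C c * X)).coeff n = c ^ n * p.coeff n := by
  induction p using Polynomial.induction_on' with
  | add p q hp hq => simp [add_comp, hp, hq, mul_add]
  | monomial k a =>
    rw [monomial_comp, mul_pow, ← C_pow]
    rw [coeff_monomial]
    rw [show C a * (C (c ^ k) * X ^ k) = C (a * c ^ k) * X ^ k by rw [C_mul]; ring]
    rw [coeff_C_mul, coeff_X_pow]
    by_cases h : n = k <;> simp [h, eq_comm, mul_comm]

theorem stmt4 (f : ℂ[X]) (hdeg : f.natDegree = 4) (h0 : f.eval 0 = 0)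
    (hcv : ((derivative f).roots.map (fun x => f.eval x)) = {0, 1, -1}) :
    ¬ ∃ (b ζ : ℂ), IsPrimitiveRoot ζ 8 ∧ -f = f.comp (C ζ * X + C b) := by
  rintro ⟨b, ζ, hζ, hf⟩
  -- ζ^4 = -1
  have hζ4 : ζ ^ 4 = -1 :=
    (hζ.pow (by norm_num) (by norm_num : 8 = 4 * 2)).eq_neg_one_of_two_right
  set i : ℂ := ζ ^ 2 with hi
  have hi2 : i ^ 2 = -1 := by rw [hi, ← pow_mul]; exact hζ4
  have hine : i ≠ 1 := by
    intro h; rw [h] at hi2; norm_num at hi2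
  set c : ℂ := ζ * b + b with hc
  -- f = f.comp (C i * X + C c)
  have key : f = f.comp (C i * X + C c) := by
    have h2 : (C ζ * X + C b).comp (C ζ * X + C b) = C i * X + C c := by
      simp [comp, eval₂, hi, hc]
      ring
    calc f = -(-f) := by ring
    _ = -(f.comp (C ζ * X + C b)) := by rw [← hf]
    _ = (-f).comp (C ζ * X + C b) := by simp
    _ = (f.comp (C ζ * X + C b)).comp (C ζ * X + C b) := by rw [hf]
    _ = f.comp ((C ζ * X + C b).comp (C ζ * X + C b)) := (comp_assoc f _ _)
    _ = f.comp (C i * X + C c) := by rw [h2]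
  set p : ℂ := c / (1 - i) with hp
  have hip : i * p + c = p := by
    have h1 : (1 : ℂ) - i ≠ 0 := by
      intro h; apply hine; linear_combination -h
    rw [hp, div_eq_mul_inv]
    linear_combination (-c) * mul_inv_cancel₀ h1
  set h : ℂ[X] := f.comp (X + C p) with hh
  have hcomp : h.comp (C i * X) = h := by
    rw [hh, comp_assoc]
    have : (X + C p).comp (C i * X) = (C i * X + C c).comp (X + C p) := by
      simp only [add_comp, X_comp, C_comp, mul_comp]
      rw [show C i * (X + C p) + C c = C i * X + C (i * p + c) by
        rw [mul_add, add_assoc, ← C_mul, ← C_add]]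
      rw [hip]
    rw [this, ← comp_assoc, ← key]
  -- vanishing coefficients
  have hvan : ∀ n, i ^ n ≠ 1 → h.coeff n = 0 := by
    intro n hn
    have := congrArg (fun q => q.coeff n) hcomp
    simp only [coeff_comp_C_mul_X] at this
    by_contra hne
    exact hn (mul_right_cancel₀ hne (by rw [this, one_mul]))
  have h1 : h.coeff 1 = 0 := hvan 1 (by simpa using hine)
  have h2 : h.coeff 2 = 0 := hvan 2 (by rw [hi2]; norm_num)
  have h3 : h.coeff 3 = 0 := hvan 3 (by
    intro he
    have h4i : i ^ 4 = 1 := by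
      rw [show (4:ℕ) = 2*2 from rfl, pow_mul, hi2]; norm_num
    apply hine
    calc i = i ^ 3 * i := by rw [he, one_mul]
    _ = i ^ 4 := by ring
    _ = 1 := h4i)
  have hdh : h.natDegree = 4 := by
    rw [hh, natDegree_comp]
    simp [hdeg]
  have hne0 : h ≠ 0 := by intro he; rw [he] at hdh; simp at hdh
  have h4 : h.coeff 4 ≠ 0 := by
    rw [← hdh]; exact leadingCoeff_ne_zero.mpr hne0
  -- derivative h = C (4 * h.coeff 4) * X^3
  have hdh' : derivative h = C (4 * h.coeff 4) * X ^ 3 := by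
    ext n
    rw [coeff_derivative, coeff_C_mul, coeff_X_pow]
    match n with
    | 0 => simp [h1]
    | 1 => simp [h2]
    | 2 => simp [h3]
    | 3 => norm_num [mul_comm]
    | (m+4) =>
      have : h.coeff (m + 4 + 1) = 0 :=
        coeff_eq_zero_of_natDegree_lt (by omega)
      simp [this]
  -- f = h.comp (X - C p)
  have hfh : f = h.comp (X - C p) := by
    rw [hh, comp_assoc]
    simp [sub_comp]
  have hdf : derivative f = C (4 * h.coeff 4) * (X - C p) ^ 3 := by
    rw [hfh, derivative_comp, hdh']
    simp [mul_comp]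
  have hroots : (derivative f).roots = 3 • {p} := by
    rw [hdf, roots_C_mul _ (by simpa using h4), roots_pow, roots_X_sub_C]
  rw [hroots] at hcv
  have hrep : (Multiset.replicate 3 (f.eval p) : Multiset ℂ) = {0, 1, -1} := by
    rw [← hcv]
    rw [show (3 • ({p} : Multiset ℂ)) = Multiset.replicate 3 p by
      simp [Multiset.nsmul_singleton]]
    simp [Multiset.map_replicate]
  have e0 : f.eval p = 0 := by
    have : (0 : ℂ) ∈ Multiset.replicate 3 (f.eval p) := by rw [hrep]; simp
    exact (Multiset.eq_of_mem_replicate this).symm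
  have e1 : f.eval p = 1 := by
    have : (1 : ℂ) ∈ Multiset.replicate 3 (f.eval p) := by rw [hrep]; simp
    exact (Multiset.eq_of_mem_replicate this).symm
  rw [e0] at e1
  norm_num at e1
end

section
/- For a complex cubic E: y² = x³ + Ax + B with Δ_E = −16(4A³+27B²) ≠ 0 and B ≠ 0, let f_E(x) = 12∫₀ˣ(s³+As+B)ds − A² = 3x⁴ + 6Ax² + 12Bx − A². Then the j-invariant of the cubic z² = p_E(x), where p_E is the monic cubic vanishing at the three critical values of f_E, equals 2²⁰·A³(A³−54B²)³/(B²·Δ_E³). -/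
/-!
At the roots of `x³ + A x + B` the quartic `f_E` takes the values `y_i`, and integrating
`f_E' = 12 (s - x₁)(s - x₂)(s - x₃)` between two roots gives `y_i - y_j = 3 x_k (x_i - x_j)³`
(using `x₁ + x₂ + x₃ = 0`). Hence the discriminant of `z² = p_E` is `B²` times the cube of the
discriminant of `E`, up to a constant, while `c₄` is a multiple of `A (A³ - 54 B²)`.
-/

open Polynomial

namespace WeierstrassCurve

variable {R : Type*} [CommRing R]

/-- The curve `y² = (x - e₁)(x - e₂)(x - e₃)`. -/
def ofRoots (e₁ e₂ e₃ : R) : WeierstrassCurve R :=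
  { a₁ := 0, a₂ := -(e₁ + e₂ + e₃), a₃ := 0,
    a₄ := e₁ * e₂ + e₁ * e₃ + e₂ * e₃, a₆ := -(e₁ * e₂ * e₃) }

variable (e₁ e₂ e₃ : R)

lemma ofRoots_c₄ :
    (ofRoots e₁ e₂ e₃).c₄ = 16 * ((e₁ + e₂ + e₃) ^ 2 - 3 * (e₁ * e₂ + e₁ * e₃ + e₂ * e₃)) := by
  simp only [ofRoots, c₄, b₂, b₄]
  ring

lemma ofRoots_Δ : (ofRoots e₁ e₂ e₃).Δ = 16 * ((e₁ - e₂) * (e₁ - e₃) * (e₂ - e₃)) ^ 2 := by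
  simp only [ofRoots, Δ, b₂, b₄, b₆, b₈]
  ring

end WeierstrassCurve

section DepressedCubic

variable {R : Type*} [CommRing R] {A B x₁ x₂ x₃ : R}

lemma vieta_of_depressed_cubic_eq_prod
    (h : (X ^ 3 + C A * X + C B : R[X]) = (X - C x₁) * (X - C x₂) * (X - C x₃)) :
    x₁ + x₂ + x₃ = 0 ∧ A = x₁ * x₂ + x₁ * x₃ + x₂ * x₃ ∧ B = -(x₁ * x₂ * x₃) := by
  have hexp : ((X - C x₁) * (X - C x₂) * (X - C x₃) : R[X]) =
      X ^ 3 - C (x₁ + x₂ + x₃) * X ^ 2 + C (x₁ * x₂ + x₁ * x₃ + x₂ * x₃) * X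
        - C (x₁ * x₂ * x₃) := by
    simp only [C_add, C_mul]
    ring
  rw [hexp] at h
  have h₂ := congrArg (coeff · 2) h
  have h₁ := congrArg (coeff · 1) h
  have h₀ := congrArg (coeff · 0) h
  simp only [coeff_add, coeff_sub, coeff_C_mul_X_pow, coeff_C_mul_X, coeff_X_pow, coeff_C]
    at h₂ h₁ h₀
  norm_num at h₂ h₁ h₀
  exact ⟨by linear_combination h₂, h₁, h₀⟩

/-- `f_E(x) = 12 ∫₀ˣ (s³ + A s + B) ds - A²`. -/
def quarticPotential (A B x : R) : R := 3 * x ^ 4 + 6 * A * x ^ 2 + 12 * B * x - A ^ 2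

variable (hsum : x₁ + x₂ + x₃ = 0) (hA : A = x₁ * x₂ + x₁ * x₃ + x₂ * x₃)
  (hB : B = -(x₁ * x₂ * x₃))
include hsum hA hB

lemma quarticPotential_sub_quarticPotential :
    quarticPotential A B x₁ - quarticPotential A B x₂ = 3 * x₃ * (x₁ - x₂) ^ 3 := by
  obtain rfl : x₃ = -x₁ - x₂ := by linear_combination hsum
  subst hA hB
  unfold quarticPotential
  ring

lemma sq_vandermonde_eq_neg_disc :
    ((x₁ - x₂) * (x₁ - x₃) * (x₂ - x₃)) ^ 2 = -(4 * A ^ 3 + 27 * B ^ 2) := by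
  obtain rfl : x₃ = -x₁ - x₂ := by linear_combination hsum
  subst hA hB
  ring

lemma ofRoots_quarticPotential_c₄ :
    (WeierstrassCurve.ofRoots (quarticPotential A B x₁) (quarticPotential A B x₂)
      (quarticPotential A B x₃)).c₄ = 144 * A * (A ^ 3 - 54 * B ^ 2) := by
  rw [WeierstrassCurve.ofRoots_c₄]
  obtain rfl : x₃ = -x₁ - x₂ := by linear_combination hsum
  subst hA hB
  unfold quarticPotential
  ring

lemma ofRoots_quarticPotential_Δ :
    (WeierstrassCurve.ofRoots (quarticPotential A B x₁) (quarticPotential A B x₂)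
      (quarticPotential A B x₃)).Δ = -11664 * B ^ 2 * (4 * A ^ 3 + 27 * B ^ 2) ^ 3 := by
  have h₁₂ := quarticPotential_sub_quarticPotential hsum hA hB
  have h₁₃ : quarticPotential A B x₁ - quarticPotential A B x₃ = 3 * x₂ * (x₁ - x₃) ^ 3 :=
    quarticPotential_sub_quarticPotential (by linear_combination hsum)
      (by linear_combination hA) (by linear_combination hB)
  have h₂₃ : quarticPotential A B x₂ - quarticPotential A B x₃ = 3 * x₁ * (x₂ - x₃) ^ 3 :=
    quarticPotential_sub_quarticPotential (by linear_combination hsum)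
      (by linear_combination hA) (by linear_combination hB)
  calc _ = 16 * 729 * (x₁ * x₂ * x₃) ^ 2 * (((x₁ - x₂) * (x₁ - x₃) * (x₂ - x₃)) ^ 2) ^ 3 := by
        rw [WeierstrassCurve.ofRoots_Δ, h₁₂, h₁₃, h₂₃]
        ring
    _ = _ := by
        rw [sq_vandermonde_eq_neg_disc hsum hA hB, hB]
        ring

end DepressedCubic

theorem stmt10 (A B x₁ x₂ x₃ : ℂ)
    (hΔ : -16 * (4 * A ^ 3 + 27 * B ^ 2) ≠ 0) (hB : B ≠ 0)
    (hfact : (X ^ 3 + C A * X + C B : ℂ[X]) = (X - C x₁) * (X - C x₂) * (X - C x₃))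
    (y₁ y₂ y₃ : ℂ)
    (hy₁ : y₁ = 3 * x₁ ^ 4 + 6 * A * x₁ ^ 2 + 12 * B * x₁ - A ^ 2)
    (hy₂ : y₂ = 3 * x₂ ^ 4 + 6 * A * x₂ ^ 2 + 12 * B * x₂ - A ^ 2)
    (hy₃ : y₃ = 3 * x₃ ^ 4 + 6 * A * x₃ ^ 2 + 12 * B * x₃ - A ^ 2)
    (hdist : y₁ ≠ y₂ ∧ y₁ ≠ y₃ ∧ y₂ ≠ y₃)
    (W : WeierstrassCurve ℂ)
    (hW : W = { a₁ := 0, a₂ := -(y₁ + y₂ + y₃), a₃ := 0,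
                a₄ := y₁ * y₂ + y₁ * y₃ + y₂ * y₃, a₆ := -(y₁ * y₂ * y₃) }) :
    W.c₄ ^ 3 / W.Δ =
      2 ^ 20 * A ^ 3 * (A ^ 3 - 54 * B ^ 2) ^ 3 /
        (B ^ 2 * (-16 * (4 * A ^ 3 + 27 * B ^ 2)) ^ 3) := by
  obtain ⟨hsum, hA_roots, hB_roots⟩ := vieta_of_depressed_cubic_eq_prod hfact
  obtain rfl : y₁ = quarticPotential A B x₁ := hy₁
  obtain rfl : y₂ = quarticPotential A B x₂ := hy₂
  obtain rfl : y₃ = quarticPotential A B x₃ := hy₃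
  obtain rfl : W = WeierstrassCurve.ofRoots _ _ _ := hW
  rw [ofRoots_quarticPotential_c₄ hsum hA_roots hB_roots,
    ofRoots_quarticPotential_Δ hsum hA_roots hB_roots]
  -- as an atom, the discriminant's inverse is not expanded by `ring`
  generalize 4 * A ^ 3 + 27 * B ^ 2 = D
  ring
end

section
/- Let f_ρ(x) = x⁴ − 6ρ³x² − 8ρ³x with ρ = 1 + √3. Then the multiset of finite critical values of f_ρ is {−υ + C, C, υ + C} where C = −720√3 − 1248 and υ = 72√(362√3 + 627); in particular the multiset of critical values of f_ρ is invariant under the affine map z ↦ −z + 2C, so f_ρ and −f_ρ + 2C have the same critical values. -/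
/-!
Writing `ρ² = 2ρ + 2` and `e² = 6ρ + 3`, the critical points of `f_ρ` are `-2(ρ + 1)` and
`ρ + 1 ± e`. Reducing `f_ρ` modulo these two relations, `f_ρ(-2(ρ + 1)) = c` and
`f_ρ(ρ + 1 ± e) = c ∓ w` with `c = -720ρ - 528` and `w = (168ρ + 120)e`, so the critical
values are `c` and a pair symmetric about it. For `ρ = 1 + √3` and `e = √(9 + 6√3)` these
are `c = C` and `w = υ`. Since `-f + 2C` has the same critical points as `f`, its critical
values are the images of those of `f` under the reflection `z ↦ -z + 2C`, which fixes the
multiset `{C - υ, C, C + υ}`.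
-/

open Polynomial

noncomputable def criticalValues {R : Type*} [CommRing R] [IsDomain R] (f : R[X]) :
    Multiset R :=
  (derivative f).roots.map fun x => f.eval x

theorem criticalValues_neg_add_C {R : Type*} [CommRing R] [IsDomain R] (f : R[X]) (a : R) :
    criticalValues (-f + C a) = (criticalValues f).map fun z => -z + a := by
  have hderiv : derivative (-f + C a) = -derivative f := by simp
  simp only [criticalValues, hderiv, roots_neg, Multiset.map_map, Function.comp_def, eval_add,
    eval_neg, eval_C]

theorem Multiset.map_neg_add_two_mul_triple {R : Type*} [CommRing R] (v c : R) :
    ({-v + c, c, v + c} : Multiset R).map (fun z => -z + 2 * c) = {-v + c, c, v + c} := by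
  simp only [Multiset.insert_eq_cons, Multiset.map_cons, Multiset.map_singleton]
  rw [show -(-v + c) + 2 * c = v + c by ring, show -c + 2 * c = c by ring,
    show -(v + c) + 2 * c = -v + c by ring]
  simp only [← Multiset.singleton_add]
  abel

section Quartic

variable {K : Type*} [CommRing K] {ρ e : K}

noncomputable def quartic (ρ : K) : K[X] :=
  X ^ 4 - C (6 * ρ ^ 3) * X ^ 2 - C (8 * ρ ^ 3) * X

theorem eval_quartic_neg_two_mul (hρ : ρ ^ 2 = 2 * ρ + 2) :
    (quartic ρ).eval (-2 * (ρ + 1)) = -720 * ρ - 528 := by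
  simp only [quartic, eval_sub, eval_mul, eval_pow, eval_C, eval_X]
  linear_combination (-24 * ρ ^ 3 - 64 * ρ ^ 2 - 120 * ρ - 272) * hρ

theorem eval_quartic_add (hρ : ρ ^ 2 = 2 * ρ + 2) (he : e ^ 2 = 6 * ρ + 3) :
    (quartic ρ).eval (ρ + 1 + e) = -((168 * ρ + 120) * e) + (-720 * ρ - 528) := by
  simp only [quartic, eval_sub, eval_mul, eval_pow, eval_C, eval_X]
  linear_combination
    (-6 * ρ ^ 3 - 12 * ρ ^ 2 * e - 31 * ρ ^ 2 - 6 * ρ * e ^ 2 - 40 * ρ * e - 84 * ρ - 6 * e ^ 2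
      - 68 * e - 260) * hρ + (4 * ρ * e - 6 * ρ + e ^ 2 + 4 * e - 3) * he

variable [IsDomain K] [CharZero K]

theorem derivative_quartic (hρ : ρ ^ 2 = 2 * ρ + 2) (he : e ^ 2 = 6 * ρ + 3) :
    derivative (quartic ρ) =
      C 4 * (({ρ + 1 + e, -2 * (ρ + 1), ρ + 1 - e} : Multiset K).map fun r => X - C r).prod := by
  apply Polynomial.funext
  intro x
  simp only [quartic, Multiset.insert_eq_cons, Multiset.map_cons, Multiset.map_singleton,
    Multiset.prod_cons, Multiset.prod_singleton, derivative_sub, derivative_mul, derivative_C,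
    derivative_X_pow, derivative_X, eval_sub, eval_mul, eval_pow, eval_C, eval_X, zero_mul,
    mul_one, zero_add]
  linear_combination (-12 * x * ρ - 12 * x - 16 * ρ - 8) * hρ + (4 * x + 8 * ρ + 8) * he

theorem roots_derivative_quartic (hρ : ρ ^ 2 = 2 * ρ + 2) (he : e ^ 2 = 6 * ρ + 3) :
    (derivative (quartic ρ)).roots = {ρ + 1 + e, -2 * (ρ + 1), ρ + 1 - e} := by
  rw [derivative_quartic hρ he, roots_C_mul _ (by norm_num : (4 : K) ≠ 0),
    roots_multiset_prod_X_sub_C]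

theorem criticalValues_quartic (hρ : ρ ^ 2 = 2 * ρ + 2) (he : e ^ 2 = 6 * ρ + 3) :
    criticalValues (quartic ρ) =
      {-((168 * ρ + 120) * e) + (-720 * ρ - 528), -720 * ρ - 528,
        (168 * ρ + 120) * e + (-720 * ρ - 528)} := by
  have he' : (-e) ^ 2 = 6 * ρ + 3 := by rw [neg_sq, he]
  have hminus := eval_quartic_add hρ he'
  rw [← sub_eq_add_neg, mul_neg, neg_neg] at hminus
  simp only [criticalValues, roots_derivative_quartic hρ he, Multiset.insert_eq_cons,
    Multiset.map_cons, Multiset.map_singleton, eval_quartic_add hρ he,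
    eval_quartic_neg_two_mul hρ, hminus]

end Quartic

theorem stmt14 :
    let ρ : ℝ := 1 + Real.sqrt 3
    let c0 : ℝ := -720 * Real.sqrt 3 - 1248
    let υ : ℝ := 72 * Real.sqrt (362 * Real.sqrt 3 + 627)
    let f : ℝ[X] := X ^ 4 - C (6 * ρ ^ 3) * X ^ 2 - C (8 * ρ ^ 3) * X
    let g : ℝ[X] := -f + C (2 * c0)
    ((derivative f).roots.map (fun x => f.eval x)) = {-υ + c0, c0, υ + c0} ∧
    ((derivative g).roots.map (fun x => g.eval x)) =
      ((derivative f).roots.map (fun x => f.eval x)) := by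
  intro ρ c0 υ f g
  set e := Real.sqrt (9 + 6 * Real.sqrt 3)
  have hs : Real.sqrt 3 ^ 2 = 3 := Real.sq_sqrt (by norm_num)
  have hρ : ρ ^ 2 = 2 * ρ + 2 := by linear_combination hs
  have he : e ^ 2 = 6 * ρ + 3 := by
    rw [Real.sq_sqrt (by positivity)]
    ring
  have hc : -720 * ρ - 528 = c0 := by ring
  have hw : (168 * ρ + 120) * e = υ := by
    have hsq : ((168 * ρ + 120) * e) ^ 2 = υ ^ 2 := by
      rw [mul_pow, he, mul_pow, Real.sq_sqrt (by positivity)]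
      linear_combination (834624 + 169344 * Real.sqrt 3) * hs
    exact (sq_eq_sq₀ (by positivity) (by positivity)).mp hsq
  have hf : criticalValues f = {-υ + c0, c0, υ + c0} := by
    rw [← hw, ← hc]
    exact criticalValues_quartic hρ he
  refine ⟨hf, ?_⟩
  change criticalValues (-f + C (2 * c0)) = criticalValues f
  rw [criticalValues_neg_add_C, hf, Multiset.map_neg_add_two_mul_triple]
end

section
/- For all t ∈ ℚ with t ∉ {−2, 0, 1} and t²+t+1 ≠ 0, the polynomials f_t(x) = x⁴ − 6t³x² − 8t³x and g_t(x) = −(t⁴(t−1)⁶/(3(t+2)⁴))x⁴ + (2t⁴(t−1)³/(t+2))x² + (8t⁴(t−1)³/(3(t+2)))x − 8t⁴(t²+t+1) have the same multiset of finite critical values. -/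
open Polynomial
set_option maxHeartbeats 2000000

theorem stmt15_aux1 {L : Type} [Field L] [CharZero L] (T A B D : L) (hT0 : T ≠ 0) (hT1 : T - 1 ≠ 0)
    (hT2 : T + 2 ≠ 0)
    (f1 : 4 * -(T ^ 4 * (T - 1) ^ 6 / (3 * (T + 2) ^ 4)) * (A * B + A * D + B * D)
      = 2 * (2 * T ^ 4 * (T - 1) ^ 3 / (T + 2)))
    (f0 : 4 * -(T ^ 4 * (T - 1) ^ 6 / (3 * (T + 2) ^ 4)) * -(A * B * D)
      = 8 * T ^ 4 * (T - 1) ^ 3 / (3 * (T + 2))) :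
    (A*B + A*D + B*D) * (T-1)^3 = -3*(T+2)^3 ∧ (A*B*D) * (T-1)^3 = 2*(T+2)^3 := by
  field_simp at f1 f0
  exact ⟨by linear_combination (-1/4 : L) * f1, by linear_combination (1/4 : L) * f0⟩

theorem stmt15_aux2 {L : Type} [Field L] [CharZero L] (T x : L) (hT0 : T ≠ 0) (hT1 : T - 1 ≠ 0)
    (hT2 : T + 2 ≠ 0)
    (hx' : 4 * -(T ^ 4 * (T - 1) ^ 6 / (3 * (T + 2) ^ 4)) * x ^ 3
      + 2 * (2 * T ^ 4 * (T - 1) ^ 3 / (T + 2)) * x + 8 * T ^ 4 * (T - 1) ^ 3 / (3 * (T + 2)) = 0) :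
    (T-1)^3 * x^3 = 3*(T+2)^3*x + 2*(T+2)^3 := by
  field_simp at hx'
  apply mul_left_cancel₀ (show (-4 * T^4 * (T-1)^3 : L) ≠ 0 from
    mul_ne_zero (mul_ne_zero (by norm_num) (pow_ne_zero _ hT0)) (pow_ne_zero _ hT1))
  linear_combination hx'

theorem stmt15_aux3 {L : Type} [Field L] [CharZero L] (T x : L) (hT2 : T + 2 ≠ 0) :
    (3*(T+2)^4) * (-(T ^ 4 * (T - 1) ^ 6 / (3 * (T + 2) ^ 4)) * x ^ 4
      + 2 * T ^ 4 * (T - 1) ^ 3 / (T + 2) * x ^ 2 + 8 * T ^ 4 * (T - 1) ^ 3 / (3 * (T + 2)) * x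
      + -(8 * T ^ 4 * (T ^ 2 + T + 1))) = -(T^4*(T-1)^6)*x^4
      + 6*T^4*(T-1)^3*(T+2)^3*x^2 + 8*T^4*(T-1)^3*(T+2)^3*x
      - 24*T^4*(T^2+T+1)*(T+2)^4 := by
  field_simp
  ring

theorem stmt15 (t : ℚ) (h2 : t ≠ -2) (h0 : t ≠ 0) (h1 : t ≠ 1)
    (hq : t ^ 2 + t + 1 ≠ 0) :
    let K := AlgebraicClosure ℚ
    let f : ℚ[X] := X ^ 4 - C (6 * t ^ 3) * X ^ 2 - C (8 * t ^ 3) * X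
    let g : ℚ[X] := C (-(t ^ 4 * (t - 1) ^ 6 / (3 * (t + 2) ^ 4))) * X ^ 4
        + C (2 * t ^ 4 * (t - 1) ^ 3 / (t + 2)) * X ^ 2
        + C (8 * t ^ 4 * (t - 1) ^ 3 / (3 * (t + 2))) * X
        + C (-(8 * t ^ 4 * (t ^ 2 + t + 1)))
    let F := f.map (algebraMap ℚ K)
    let G := g.map (algebraMap ℚ K)
    ((derivative F).roots.map (fun x => F.eval x)) =
      ((derivative G).roots.map (fun x => G.eval x)) := by
  intro K f g F G
  set φ : ℚ →+* K := algebraMap ℚ K with hφ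
  have hinj : Function.Injective φ := φ.injective
  set T : K := φ t with hT
  -- nonzero facts
  have hT0 : T ≠ 0 := fun h => h0 (hinj (by simpa [hT] using h))
  have hT1 : T - 1 ≠ 0 := fun h => h1 (hinj (by rw [map_one]; exact sub_eq_zero.mp h))
  have hT2 : T + 2 ≠ 0 := fun h => h2 (hinj (by
    rw [show φ (-2) = (-2:K) by simp]; exact eq_neg_of_add_eq_zero_left h))
  have h3 : (3:K) ≠ 0 := by
    have := (algebraMap ℚ K).injective.ne (a₁ := (3:ℚ)) (a₂ := 0) (by norm_num)
    simpa using this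
  -- explicit forms
  have hF : F = X ^ 4 - C (6 * T ^ 3) * X ^ 2 - C (8 * T ^ 3) * X := by
    simp [F, f, Polynomial.map_sub, Polynomial.map_pow, Polynomial.map_mul, hT]
  have hG : G = C (-(T ^ 4 * (T - 1) ^ 6 / (3 * (T + 2) ^ 4))) * X ^ 4
      + C (2 * T ^ 4 * (T - 1) ^ 3 / (T + 2)) * X ^ 2
      + C (8 * T ^ 4 * (T - 1) ^ 3 / (3 * (T + 2))) * X
      + C (-(8 * T ^ 4 * (T ^ 2 + T + 1))) := by
    simp [G, g, Polynomial.map_add, Polynomial.map_mul, Polynomial.map_pow, map_div₀, hT]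
  have hF' : derivative F = C 4 * X ^ 3 - C (12 * T ^ 3) * X - C (8 * T ^ 3) := by
    rw [hF]; simp only [derivative_sub, derivative_mul, derivative_C, derivative_X_pow, derivative_X]
    simp only [C_mul, map_ofNat, map_natCast, Nat.cast_ofNat]; ring
  have hG' : derivative G = C (4 * -(T ^ 4 * (T - 1) ^ 6 / (3 * (T + 2) ^ 4))) * X ^ 3
      + C (2 * (2 * T ^ 4 * (T - 1) ^ 3 / (T + 2))) * X
      + C (8 * T ^ 4 * (T - 1) ^ 3 / (3 * (T + 2))) := by
    rw [hG]; simp only [derivative_add, derivative_mul, derivative_C, derivative_X_pow, derivative_X]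
    simp only [C_mul, map_ofNat, map_natCast, Nat.cast_ofNat]; ring
  have h4 : (4:K) ≠ 0 := by
    have := (algebraMap ℚ K).injective.ne (a₁ := (4:ℚ)) (a₂ := 0) (by norm_num)
    simpa using this
  have hdF : (derivative F).natDegree = 3 := by
    rw [hF']; compute_degree!
  have lcF : (derivative F).leadingCoeff = 4 := by
    rw [Polynomial.leadingCoeff, hdF, hF']
    simp only [coeff_sub, coeff_C_mul, coeff_X_pow, coeff_C, coeff_X]
    norm_num
  have hcardF : (derivative F).roots.card = 3 := by
    rw [← hdF]
    exact (Polynomial.splits_iff_card_roots).mp (IsAlgClosed.splits _)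
  obtain ⟨a, b, c, habc⟩ := Multiset.card_eq_three.mp hcardF
  have hfacF : derivative F = C 4 * ((X - C a) * (X - C b) * (X - C c)) := by
    have h := Polynomial.C_leadingCoeff_mul_prod_multiset_X_sub_C
      (p := derivative F) (hcardF.trans hdF.symm)
    rw [lcF, habc] at h
    rw [← h]
    simp only [Multiset.insert_eq_cons, Multiset.map_cons, Multiset.map_singleton,
      Multiset.prod_cons, Multiset.prod_singleton]
    ring
  have expand3 : ∀ u v w : K, (X - C u) * (X - C v) * (X - C w)
      = X^3 - C (u+v+w) * X^2 + C (u*v+u*w+v*w) * X - C (u*v*w) := by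
    intro u v w; simp only [C_add, C_mul]; ring
  have hv := hfacF.symm.trans hF'
  rw [expand3] at hv
  have e2 := congrArg (fun p : K[X] => p.coeff 2) hv
  have e1 := congrArg (fun p : K[X] => p.coeff 1) hv
  have e0 := congrArg (fun p : K[X] => p.coeff 0) hv
  simp only [coeff_sub, coeff_add, coeff_C_mul, coeff_X_pow, coeff_C, coeff_X] at e2 e1 e0
  norm_num at e2 e1 e0
  have hs1 : a + b + c = 0 := by linear_combination -e2
  have hs2 : a*b + a*c + b*c = -3*T^3 := by linear_combination e1/4
  have hs3 : a*b*c = 2*T^3 := by linear_combination -e0/4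
  -- root equations
  have hroot : ∀ x ∈ ({a,b,c} : Multiset K), x^3 = 3*T^3*x + 2*T^3 := by
    intro x hx
    rw [← habc] at hx
    have hx' := isRoot_of_mem_roots hx
    rw [IsRoot, hF'] at hx'
    simp only [eval_sub, eval_mul, eval_pow, eval_X, eval_C] at hx'
    linear_combination hx'/4
  have hval : ∀ x ∈ ({a,b,c} : Multiset K), F.eval x = -3*T^3*(x^2+2*x) := by
    intro x hx
    rw [hF]
    simp only [eval_sub, eval_mul, eval_pow, eval_X, eval_C]
    linear_combination x * (hroot x hx)
  -- G side
  have hLk : (4 * -(T ^ 4 * (T - 1) ^ 6 / (3 * (T + 2) ^ 4))) ≠ 0 := by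
    refine mul_ne_zero h4 (neg_ne_zero.mpr (div_ne_zero ?_ ?_))
    · exact mul_ne_zero (pow_ne_zero _ hT0) (pow_ne_zero _ hT1)
    · exact mul_ne_zero h3 (pow_ne_zero _ hT2)
  have hdG : (derivative G).natDegree = 3 := by
    rw [hG']; compute_degree!
  have lcG : (derivative G).leadingCoeff = 4 * -(T ^ 4 * (T - 1) ^ 6 / (3 * (T + 2) ^ 4)) := by
    rw [Polynomial.leadingCoeff, hdG, hG']
    simp only [coeff_add, coeff_C_mul, coeff_X_pow, coeff_C, coeff_X]
    norm_num
  have hcardG : (derivative G).roots.card = 3 := by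
    rw [← hdG]
    exact (Polynomial.splits_iff_card_roots).mp (IsAlgClosed.splits _)
  obtain ⟨A, B, D, hABD⟩ := Multiset.card_eq_three.mp hcardG
  have hfacG : derivative G = C (4 * -(T ^ 4 * (T - 1) ^ 6 / (3 * (T + 2) ^ 4)))
      * ((X - C A) * (X - C B) * (X - C D)) := by
    have h := Polynomial.C_leadingCoeff_mul_prod_multiset_X_sub_C
      (p := derivative G) (hcardG.trans hdG.symm)
    rw [lcG, hABD] at h
    rw [← h]
    simp only [Multiset.insert_eq_cons, Multiset.map_cons, Multiset.map_singleton,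
      Multiset.prod_cons, Multiset.prod_singleton]
    ring
  have hv' := hfacG.symm.trans hG'
  rw [expand3] at hv'
  have f2 := congrArg (fun p : K[X] => p.coeff 2) hv'
  have f1 := congrArg (fun p : K[X] => p.coeff 1) hv'
  have f0 := congrArg (fun p : K[X] => p.coeff 0) hv'
  simp only [coeff_sub, coeff_add, coeff_C_mul, coeff_X_pow, coeff_C, coeff_X] at f2 f1 f0
  norm_num at f2 f1 f0
  have h12 : (12:K) ≠ 0 := by
    have := (algebraMap ℚ K).injective.ne (a₁ := (12:ℚ)) (a₂ := 0) (by norm_num)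
    simpa using this
  have hs1' : A + B + D = 0 := by
    rcases f2 with ((h|h)|h)|h
    · exact absurd h hT0
    · exact absurd h hT1
    · exact absurd h hT2
    · linear_combination -h
  have hs2' : (A*B + A*D + B*D) * (T-1)^3 = -3*(T+2)^3 := by
    exact (stmt15_aux1 T A B D hT0 hT1 hT2 f1 f0).1
  have hs3' : (A*B*D) * (T-1)^3 = 2*(T+2)^3 := by
    exact (stmt15_aux1 T A B D hT0 hT1 hT2 f1 f0).2
  have hrootG : ∀ x ∈ ({A,B,D} : Multiset K), (T-1)^3 * x^3 = 3*(T+2)^3*x + 2*(T+2)^3 := by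
    intro x hx
    rw [← hABD] at hx
    have hx' := isRoot_of_mem_roots hx
    rw [IsRoot, hG'] at hx'
    simp only [eval_add, eval_mul, eval_pow, eval_X, eval_C] at hx'
    exact stmt15_aux2 T x hT0 hT1 hT2 hx'
  have h34 : (3*(T+2)^4 : K) ≠ 0 := mul_ne_zero h3 (pow_ne_zero _ hT2)
  have hGe : ∀ x : K, (3*(T+2)^4) * G.eval x = -(T^4*(T-1)^6)*x^4
      + 6*T^4*(T-1)^3*(T+2)^3*x^2 + 8*T^4*(T-1)^3*(T+2)^3*x
      - 24*T^4*(T^2+T+1)*(T+2)^4 := by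
    intro x
    rw [hG]
    simp only [eval_add, eval_mul, eval_pow, eval_X, eval_C]
    exact stmt15_aux3 T x hT2
  have hvalG : ∀ x ∈ ({A,B,D} : Multiset K), (T+2) * G.eval x
      = T^4*(T-1)^3*(x^2+2*x) - 8*T^4*(T^2+T+1)*(T+2) := by
    intro x hx
    apply mul_left_cancel₀ h34
    linear_combination (T+2) * hGe x + (-(T^4)*(T-1)^3*(T+2)*x) * hrootG x hx
  -- symmetric identities, F side
  have E1 : eval a F + eval b F + eval c F = -18*T^6 := by
    rw [hval a (by simp), hval b (by simp), hval c (by simp)]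
    linear_combination (-3*T^3*(a+b+c+2))*hs1 + (6*T^3)*hs2
  have E2 : eval a F * eval b F + eval a F * eval c F + eval b F * eval c F
      = 81*T^12 - 216*T^9 := by
    rw [hval a (by simp), hval b (by simp), hval c (by simp)]
    linear_combination (9*T^6*(2*(a*b+a*c+b*c)-2*(a*b*c)))*hs1
      + (9*T^6*((a*b+a*c+b*c)-3*T^3+4))*hs2 + (-54*T^6)*hs3
  have E3 : eval a F * eval b F * eval c F = 216*T^15 - 432*T^12 := by
    rw [hval a (by simp), hval b (by simp), hval c (by simp)]
    linear_combination (-108*T^9*(a*b*c))*hs1 + (-54*T^9*(a*b*c))*hs2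
      + (-27*T^9*((a*b*c)-4*T^3+8))*hs3
  -- symmetric identities, G side
  have EG1 : eval A G + eval B G + eval D G = -18*T^6 := by
    apply mul_left_cancel₀ hT2
    linear_combination hvalG A (by simp) + hvalG B (by simp) + hvalG D (by simp)
      + (T^4*(T-1)^3*((A+B+D)+2))*hs1' + (-2*T^4)*hs2'
  have EG2 : eval A G * eval B G + eval A G * eval D G + eval B G * eval D G
      = 81*T^12 - 216*T^9 := by
    apply mul_left_cancel₀ (mul_ne_zero hT2 hT2)
    linear_combination
      ((T+2)*eval B G + (T+2)*eval D G) * hvalG A (by simp)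
      + ((T^4*(T-1)^3*(A^2+2*A) - 8*T^4*(T^2+T+1)*(T+2)) + (T+2)*eval D G) * hvalG B (by simp)
      + ((T^4*(T-1)^3*(A^2+2*A) - 8*T^4*(T^2+T+1)*(T+2))
          + (T^4*(T-1)^3*(B^2+2*B) - 8*T^4*(T^2+T+1)*(T+2))) * hvalG D (by simp)
      + ((T^4*(T-1)^3)^2*(2*(A*B+A*D+B*D)-2*(A*B*D))
          + 2*(T^4*(T-1)^3)*(-8*T^4*(T^2+T+1)*(T+2))*((A+B+D)+2))*hs1'
      + (T^8*((A*B+A*D+B*D)*(T-1)^3 - 3*(T+2)^3) + 4*T^8*(T-1)^3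
          - 4*T^4*(-8*T^4*(T^2+T+1)*(T+2)))*hs2'
      + (-6*T^8*(T-1)^3)*hs3'
  have EG3 : eval A G * eval B G * eval D G = 216*T^15 - 432*T^12 := by
    apply mul_left_cancel₀ (mul_ne_zero (mul_ne_zero hT2 hT2) hT2)
    linear_combination
      (((T+2)*eval B G)*((T+2)*eval D G)) * hvalG A (by simp)
      + ((T^4*(T-1)^3*(A^2+2*A) - 8*T^4*(T^2+T+1)*(T+2))*((T+2)*eval D G)) * hvalG B (by simp)
      + ((T^4*(T-1)^3*(A^2+2*A) - 8*T^4*(T^2+T+1)*(T+2))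
          * (T^4*(T-1)^3*(B^2+2*B) - 8*T^4*(T^2+T+1)*(T+2))) * hvalG D (by simp)
      + (4*(T^4*(T-1)^3)^3*(A*B*D)
          + (T^4*(T-1)^3)^2*(-8*T^4*(T^2+T+1)*(T+2))*(2*(A*B+A*D+B*D)-2*(A*B*D))
          + (T^4*(T-1)^3)*(-8*T^4*(T^2+T+1)*(T+2))^2*((A+B+D)+2))*hs1'
      + (2*T^12*(T-1)^3*((A*B*D)*(T-1)^3)
          + T^8*(-8*T^4*(T^2+T+1)*(T+2))*((A*B+A*D+B*D)*(T-1)^3 - 3*(T+2)^3)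
          + 4*T^8*(T-1)^3*(-8*T^4*(T^2+T+1)*(T+2))
          - 2*T^4*(-8*T^4*(T^2+T+1)*(T+2))^2)*hs2'
      + (T^12*(T-1)^3*((A*B*D)*(T-1)^3 + 2*(T+2)^3) - 6*T^12*(T-1)^3*(T+2)^3
          + 8*T^12*(T-1)^6 - 6*T^8*(T-1)^3*(-8*T^4*(T^2+T+1)*(T+2)))*hs3'
  -- multisets with equal elementary symmetric functions are equal (card 3)
  have tri : ∀ v1 v2 v3 w1 w2 w3 : K, v1+v2+v3 = w1+w2+w3 →
      v1*v2+v1*v3+v2*v3 = w1*w2+w1*w3+w2*w3 → v1*v2*v3 = w1*w2*w3 →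
      ({v1,v2,v3} : Multiset K) = {w1,w2,w3} := by
    intro v1 v2 v3 w1 w2 w3 p1 p2 p3
    have r : ∀ u1 u2 u3 : K, ((X - C u1)*(X - C u2)*(X - C u3)).roots
        = ({u1,u2,u3} : Multiset K) := by
      intro u1 u2 u3
      rw [roots_mul (mul_ne_zero (mul_ne_zero (X_sub_C_ne_zero u1) (X_sub_C_ne_zero u2))
          (X_sub_C_ne_zero u3)),
        roots_mul (mul_ne_zero (X_sub_C_ne_zero u1) (X_sub_C_ne_zero u2)),
        roots_X_sub_C, roots_X_sub_C, roots_X_sub_C]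
      rfl
    rw [← r v1 v2 v3, ← r w1 w2 w3, expand3, expand3, p1, p2, p3]
  rw [habc, hABD]
  simp only [Multiset.insert_eq_cons, Multiset.map_cons, Multiset.map_singleton]
  exact tri _ _ _ _ _ _ (E1.trans EG1.symm) (E2.trans EG2.symm) (E3.trans EG3.symm)
end

section
/- For t ∈ ℚ, t ∉ {−2, 0, 1}, the affine map λ_t(z) = −(t⁴(t−1)⁶/(3(t+2)⁴))·z − 36t⁴(t²+t+1) sends the multiset of critical values of g^t(x) = 3x⁴ − 18s³x² − 24s³x − 9s⁶ (with s = (t+2)/(t−1)) to the multiset of critical values of f^t(x) = 3x⁴ − 18t³x² − 24t³x − 9t⁶. -/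
open Polynomial

lemma key1 {K : Type*} [Field K] (T B : K)
    (hb : B^3*(T-1)^3 - 3*(T+2)^3*B - 2*(T+2)^3 = 0) :
    (T*(2*(T+2) - B*(T-1)))^3
      - 3*T^3*(T*(2*(T+2)-B*(T-1)))*((T+2)+B*(T-1))^2
      - 2*T^3*((T+2)+B*(T-1))^3 = 0 := by
  linear_combination (3*T^3*(T-1)) * hb

lemma key2 {K : Type*} [Field K] (T B : K)
    (hb : B^3*(T-1)^3 - 3*(T+2)^3*B - 2*(T+2)^3 = 0) :
    (-(T^4) * (3*B^4*(T-1)^6 - 18*(T+2)^3*(T-1)^3*B^2 - 24*(T+2)^3*(T-1)^3*B - 9*(T+2)^6))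
        * ((T+2)+B*(T-1))^4
      + (-(36*T^4*(T^2+T+1))) * (3*(T+2)^4) * ((T+2)+B*(T-1))^4
      - 3*(T+2)^4 * (3*(T*(2*(T+2)-B*(T-1)))^4
          - 18*T^3*(T*(2*(T+2)-B*(T-1)))^2*((T+2)+B*(T-1))^2
          - 24*T^3*(T*(2*(T+2)-B*(T-1)))*((T+2)+B*(T-1))^3
          - 9*T^6*((T+2)+B*(T-1))^4) = 0 := by
  linear_combination ((T-1)^2 * (1152*T^4 + 1344*T^4*B - 528*T^4*B^2 + 144*T^4*B^3 - 24*T^4*B^4 + 3*T^4*B^5 + 2880*T^5 + 3936*T^5*B - 600*T^5*B^2 - 180*T^5*B^3 + 84*T^5*B^4 - 15*T^5*B^5 + 2880*T^6 + 4512*T^6*B + 228*T^6*B^2 - 72*T^6*B^3 - 96*T^6*B^4 + 30*T^6*B^5 + 1440*T^7 + 2544*T^7*B + 582*T^7*B^2 + 99*T^7*B^3 + 24*T^7*B^4 - 30*T^7*B^5 + 360*T^8 + 708*T^8*B + 276*T^8*B^2 + 18*T^8*B^3 + 24*T^8*B^4 + 15*T^8*B^5 + 36*T^9 + 78*T^9*B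 + 42*T^9*B^2 - 9*T^9*B^3 - 12*T^9*B^4 - 3*T^9*B^5)) * hb

lemma aux_ne {K : Type*} [Field K] [CharZero K] (S b1 b2 b3 : K) (hS0 : S ≠ 0) (hS1 : S^3 ≠ 1)
    (h1 : b1+b2+b3 = 0) (h2 : b1*b2+b1*b3+b2*b3 = -3*S^3) (h3 : b1*b2*b3 = 2*S^3) :
    b1 ≠ b2 := by
  intro h
  subst h
  have hb3 : b3 = -(2*b1) := by linear_combination h1
  subst hb3
  have e2 : b1^2 = S^3 := by linear_combination (-1/3 : K) * h2
  have e3 : b1^3 = -(S^3) := by linear_combination (-1/2 : K) * h3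
  have h6 : S^6*(S^3-1) = 0 := by
    linear_combination (b1^3 - S^3)*e3 - (b1^4 + b1^2*S^3 + S^6)*e2
  rcases mul_eq_zero.mp h6 with h | h
  · exact hS0 ((pow_eq_zero_iff (by norm_num : (6:ℕ) ≠ 0)).mp h)
  · exact hS1 (by linear_combination h)

lemma hart_gen {K : Type*} [Field K] (T β : K) (hT1 : T - 1 ≠ 0) (hT2 : T + 2 ≠ 0) (hD : (T+2) + β*(T-1) ≠ 0)
    (hc : β^3*(T-1)^3 - 3*(T+2)^3*β - 2*(T+2)^3 = 0) :
    (T*(2*(T+2) - β*(T-1)) / ((T+2) + β*(T-1)))^3 - 3*T^3*(T*(2*(T+2) - β*(T-1)) / ((T+2) + β*(T-1))) - 2*T^3 = 0 := by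
  field_simp
  linear_combination key1 T β hc

set_option maxRecDepth 20000 in
lemma hval_gen {K : Type*} [Field K] [CharZero K] (T β : K) (hT1 : T - 1 ≠ 0) (hT2 : T + 2 ≠ 0) (hD : (T+2) + β*(T-1) ≠ 0)
    (hc : β^3*(T-1)^3 - 3*(T+2)^3*β - 2*(T+2)^3 = 0) :
    -(T^4*(T-1)^6 / (3*(T+2)^4)) * (3*β^4 - 18*((T+2)/(T-1))^3*β^2 - 24*((T+2)/(T-1))^3*β - 9*((T+2)/(T-1))^6) + -(36*T^4*(T^2+T+1))
      = 3*(T*(2*(T+2) - β*(T-1)) / ((T+2) + β*(T-1)))^4 - 18*T^3*(T*(2*(T+2) - β*(T-1)) / ((T+2) + β*(T-1)))^2 - 24*T^3*(T*(2*(T+2) - β*(T-1)) / ((T+2) + β*(T-1))) - 9*T^6 := by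
  have hD' : T + 2 + (T-1)*β ≠ 0 := by rw [mul_comm]; exact hD
  field_simp
  linear_combination key2 T β hc

set_option maxHeartbeats 4000000 in
theorem stmt16 (t : ℚ) (h2 : t ≠ -2) (h0 : t ≠ 0) (h1 : t ≠ 1) :
    let K := AlgebraicClosure ℚ
    let s : ℚ := (t + 2) / (t - 1)
    let fT : ℚ[X] := 3 * X ^ 4 - C (18 * t ^ 3) * X ^ 2 - C (24 * t ^ 3) * X - C (9 * t ^ 6)
    let gT : ℚ[X] := 3 * X ^ 4 - C (18 * s ^ 3) * X ^ 2 - C (24 * s ^ 3) * X - C (9 * s ^ 6)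
    let F := fT.map (algebraMap ℚ K)
    let G := gT.map (algebraMap ℚ K)
    let a : K := algebraMap ℚ K (-(t ^ 4 * (t - 1) ^ 6 / (3 * (t + 2) ^ 4)))
    let b : K := algebraMap ℚ K (-(36 * t ^ 4 * (t ^ 2 + t + 1)))
    (((derivative G).roots.map (fun x => G.eval x)).map (fun z => a * z + b)) =
      ((derivative F).roots.map (fun x => F.eval x)) := by
  intro K s fT gT F G a b
  have hrat1 : t - 1 ≠ 0 := sub_ne_zero.mpr h1
  have hrat2 : t + 2 ≠ 0 := by intro h; exact h2 (by linarith)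
  have hs1 : s ≠ 1 := by
    intro h
    rw [show s = (t+2)/(t-1) from rfl, div_eq_one_iff_eq hrat1] at h
    linarith
  have hs0 : s ≠ 0 := div_ne_zero hrat2 hrat1
  have hs31 : s^3 ≠ 1 := by
    intro h
    have hfac : (s - 1) * (s^2 + s + 1) = 0 := by linear_combination h
    rcases mul_eq_zero.mp hfac with h | h
    · exact hs1 (by linarith [sub_eq_zero.mp h])
    · nlinarith [sq_nonneg (s + 1/2)]
  set φ := algebraMap ℚ K with hφ
  have hinj : Function.Injective φ := φ.injective
  set T := φ t with hTdef
  set S := φ s with hSdef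
  have hT1 : T - 1 ≠ 0 := by
    rw [sub_ne_zero]
    intro h; exact h1 (hinj (by rw [map_one]; exact h))
  have hT2 : T + 2 ≠ 0 := by
    intro h
    apply hrat2
    apply hinj
    rw [map_add, map_zero]
    rw [map_ofNat]; exact h
  have hT0 : T ≠ 0 := by
    intro h; exact h0 (hinj (by rw [map_zero]; exact h))
  have hS0 : S ≠ 0 := by
    intro h; exact hs0 (hinj (by rw [map_zero]; exact h))
  have hS31 : S^3 ≠ 1 := by
    intro h
    apply hs31
    apply hinj
    rw [map_pow, map_one]
    exact h
  have hφT1 : φ (t - 1) ≠ 0 := fun h => hrat1 (hinj (by rw [map_zero]; exact h))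
  have hmap1 : φ (t - 1) = T - 1 := by rw [map_sub, map_one]
  have hmap2 : φ (t + 2) = T + 2 := by rw [map_add, map_ofNat]
  have hSc : S * (T - 1) = T + 2 := by
    rw [hSdef, show s = (t+2)/(t-1) from rfl, ← hmap1, ← map_mul,
      div_mul_cancel₀ _ hrat1, hmap2]
  haveI : CharZero K := inferInstance
  -- explicit forms of F and G
  have hFeq : F = C (3:K) * X ^ 4 - C (18 * T^3) * X^2 - C (24*T^3) * X - C (9*T^6) := by
    simp only [show F = fT.map φ from rfl, show fT = 3 * X ^ 4 - C (18 * t ^ 3) * X ^ 2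
        - C (24 * t ^ 3) * X - C (9 * t ^ 6) from rfl,
      Polynomial.map_sub, Polynomial.map_mul, Polynomial.map_pow,
      Polynomial.map_X, Polynomial.map_C, Polynomial.map_ofNat, map_mul, map_pow, map_ofNat]
    rfl
  have hGeq : G = C (3:K) * X ^ 4 - C (18 * S^3) * X^2 - C (24*S^3) * X - C (9*S^6) := by
    simp only [show G = gT.map φ from rfl, show gT = 3 * X ^ 4 - C (18 * s ^ 3) * X ^ 2
        - C (24 * s ^ 3) * X - C (9 * s ^ 6) from rfl,
      Polynomial.map_sub, Polynomial.map_mul, Polynomial.map_pow,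
      Polynomial.map_X, Polynomial.map_C, Polynomial.map_ofNat, map_mul, map_pow, map_ofNat]
    rfl
  have hFev : ∀ x : K, F.eval x = 3*x^4 - 18*T^3*x^2 - 24*T^3*x - 9*T^6 := by
    intro x; rw [hFeq]; simp
  have hGev : ∀ x : K, G.eval x = 3*x^4 - 18*S^3*x^2 - 24*S^3*x - 9*S^6 := by
    intro x; rw [hGeq]; simp
  set pF : K[X] := X^3 - C (3*T^3) * X - C (2*T^3) with hpF
  set pG : K[X] := X^3 - C (3*S^3) * X - C (2*S^3) with hpG
  have hderF : derivative F = C (12:K) * pF := by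
    rw [hFeq, hpF]
    simp only [derivative_sub, derivative_mul, derivative_C, derivative_X, derivative_X_pow,
      zero_mul, mul_zero, zero_add, add_zero, mul_one]
    push_cast
    simp only [← C_mul, ← C_pow, sub_zero, pow_one, mul_sub, ← mul_assoc]
    norm_num
    ring_nf
    simp only [← C_pow, ← C_mul]
    congr 1
    show (18:AlgebraicClosure ℚ) * T^3 * 2 = T^3 * 36
    ring
  have hderG : derivative G = C (12:K) * pG := by
    rw [hGeq, hpG]
    simp only [derivative_sub, derivative_mul, derivative_C, derivative_X, derivative_X_pow,
      zero_mul, mul_zero, zero_add, add_zero, mul_one]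
    push_cast
    simp only [← C_mul, ← C_pow, sub_zero, pow_one, mul_sub, ← mul_assoc]
    norm_num
    ring_nf
    simp only [← C_pow, ← C_mul]
    congr 1
    show (18:AlgebraicClosure ℚ) * S^3 * 2 = S^3 * 36
    ring
  have h12 : (12:K) ≠ 0 := by norm_num
  have hmF : pF.Monic := by unfold pF; monicity!
  have hmG : pG.Monic := by unfold pG; monicity!
  have hdF : pF.natDegree = 3 := by unfold pF; compute_degree!
  have hdG : pG.natDegree = 3 := by unfold pG; compute_degree!
  have hcardF : Multiset.card pF.roots = 3 := by
    rw [splits_iff_card_roots.mp (IsAlgClosed.splits pF), hdF]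
  have hcardG : Multiset.card pG.roots = 3 := by
    rw [splits_iff_card_roots.mp (IsAlgClosed.splits pG), hdG]
  have hrootsF : (derivative F).roots = pF.roots := by rw [hderF, roots_C_mul _ h12]
  have hrootsG : (derivative G).roots = pG.roots := by rw [hderG, roots_C_mul _ h12]
  obtain ⟨b1, b2, b3, hb123⟩ := Multiset.card_eq_three.mp hcardG
  have hprodG : pG = (X - C b1) * ((X - C b2) * (X - C b3)) := by
    conv_lhs => rw [(prod_multiset_X_sub_C_of_monic_of_roots_card_eq hmG (by rw [hcardG, hdG])).symm]
    rw [hb123]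
    simp [Multiset.map_cons, Multiset.prod_cons]
  have hev : ∀ x : K, x^3 - 3*S^3*x - 2*S^3 = (x - b1) * ((x - b2) * (x - b3)) := by
    intro x
    have h := congrArg (eval x) hprodG
    simp only [hpG, eval_sub, eval_mul, eval_pow, eval_X, eval_C] at h
    exact h
  have he1 : b1 + b2 + b3 = 0 := by linear_combination (hev 1 + hev (-1))/2 - hev 0
  have he2 : b1*b2 + b1*b3 + b2*b3 = -3*S^3 := by linear_combination (hev (-1) - hev 1)/2
  have he3 : b1*b2*b3 = 2*S^3 := by linear_combination hev 0
  have hbc : ∀ β : K, β^3 - 3*S^3*β - 2*S^3 = 0 →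
      β^3*(T-1)^3 - 3*(T+2)^3*β - 2*(T+2)^3 = 0 := by
    intro β h
    linear_combination (T-1)^3 * h
      + (3*β+2)*((T+2)^2 + (T+2)*(S*(T-1)) + (S*(T-1))^2) * hSc
  have hDne : ∀ β : K, β^3*(T-1)^3 - 3*(T+2)^3*β - 2*(T+2)^3 = 0 →
      (T+2) + β*(T-1) ≠ 0 := by
    intro β hc hD
    have hx : β*(T-1) + (T+2) = 0 := by linear_combination hD
    have h3 : (T+2)^3 * ((β+1)*3) = 0 := by
      linear_combination -hc + ((β*(T-1))^2 - β*(T-1)*(T+2) + (T+2)^2) * hx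
    rcases mul_eq_zero.mp h3 with h | h
    · exact pow_ne_zero 3 hT2 h
    · rcases mul_eq_zero.mp h with h | h
      · have hβ : β = -1 := by linear_combination h
        rw [hβ] at hD
        have h30 : (3:K) = 0 := by linear_combination hD
        norm_num at h30
      · norm_num at h
  set A : K → K := fun β => T*(2*(T+2) - β*(T-1)) / ((T+2) + β*(T-1)) with hA
  have hαrt : ∀ β : K, β^3*(T-1)^3 - 3*(T+2)^3*β - 2*(T+2)^3 = 0 →
      (A β)^3 - 3*T^3*(A β) - 2*T^3 = 0 := by
    intro β hc
    have hD := hDne β hc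
    simp only [hA]
    exact hart_gen T β hT1 hT2 hD hc
  have ha' : a = -(T^4*(T-1)^6 / (3*(T+2)^4)) := by
    simp only [show a = φ (-(t ^ 4 * (t - 1) ^ 6 / (3 * (t + 2) ^ 4))) from rfl,
      map_neg, map_div₀, map_mul, map_pow, map_sub, map_add, map_one, map_ofNat]
    rfl
  have hb' : b = -(36*T^4*(T^2+T+1)) := by
    simp only [show b = φ (-(36 * t ^ 4 * (t ^ 2 + t + 1))) from rfl,
      map_neg, map_mul, map_pow, map_add, map_one, map_ofNat]
    rfl
  have hSS : S = (T+2)/(T-1) := by rw [eq_div_iff hT1]; exact hSc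
  have hval : ∀ β : K, β^3*(T-1)^3 - 3*(T+2)^3*β - 2*(T+2)^3 = 0 →
      a * (3*β^4 - 18*S^3*β^2 - 24*S^3*β - 9*S^6) + b
        = 3*(A β)^4 - 18*T^3*(A β)^2 - 24*T^3*(A β) - 9*T^6 := by
    intro β hc
    have hD := hDne β hc
    rw [ha', hb', hSS]
    simp only [hA]
    exact hval_gen T β hT1 hT2 hD hc
  -- root facts for b1 b2 b3
  have hr1 : b1^3 - 3*S^3*b1 - 2*S^3 = 0 := by linear_combination hev b1
  have hr2 : b2^3 - 3*S^3*b2 - 2*S^3 = 0 := by linear_combination hev b2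
  have hr3 : b3^3 - 3*S^3*b3 - 2*S^3 = 0 := by linear_combination hev b3
  have hc1 := hbc b1 hr1
  have hc2 := hbc b2 hr2
  have hc3 := hbc b3 hr3
  -- distinctness of the b's
  have hne12 : b1 ≠ b2 := aux_ne S b1 b2 b3 hS0 hS31 he1 he2 he3
  have hne13 : b1 ≠ b3 := aux_ne S b1 b3 b2 hS0 hS31 (by linear_combination he1)
    (by linear_combination he2) (by linear_combination he3)
  have hne23 : b2 ≠ b3 := aux_ne S b2 b3 b1 hS0 hS31 (by linear_combination he1)
    (by linear_combination he2) (by linear_combination he3)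
  -- injectivity of A on roots
  have hinjA : ∀ β γ : K, β^3*(T-1)^3 - 3*(T+2)^3*β - 2*(T+2)^3 = 0 →
      γ^3*(T-1)^3 - 3*(T+2)^3*γ - 2*(T+2)^3 = 0 → A β = A γ → β = γ := by
    intro β γ hcβ hcγ h
    rw [hA] at h
    simp only at h
    rw [div_eq_div_iff (G₀ := AlgebraicClosure ℚ) (hDne β hcβ) (hDne γ hcγ)] at h
    have h9 : (3*T*(T+2)*(T-1))*(γ - β) = 0 := by linear_combination h
    have hnz : (3:K)*T*(T+2)*(T-1) ≠ 0 :=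
      mul_ne_zero (mul_ne_zero (mul_ne_zero (by norm_num) hT0) hT2) hT1
    have := (mul_eq_zero.mp h9).resolve_left hnz
    linear_combination -this
  have hA12 : A b1 ≠ A b2 := fun h => hne12 (hinjA b1 b2 hc1 hc2 h)
  have hA13 : A b1 ≠ A b3 := fun h => hne13 (hinjA b1 b3 hc1 hc3 h)
  have hA23 : A b2 ≠ A b3 := fun h => hne23 (hinjA b2 b3 hc2 hc3 h)
  -- pF.roots is exactly {A b1, A b2, A b3}
  have hpFne : pF ≠ 0 := hmF.ne_zero
  have hmem : ∀ β : K, β^3*(T-1)^3 - 3*(T+2)^3*β - 2*(T+2)^3 = 0 → A β ∈ pF.roots := by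
    intro β hc
    rw [mem_roots hpFne]
    show eval (A β) pF = 0
    simp only [hpF, eval_sub, eval_mul, eval_pow, eval_X, eval_C]
    linear_combination hαrt β hc
  have hnodup : ({A b1, A b2, A b3} : Multiset K).Nodup := by
    simp [Multiset.nodup_cons, Multiset.mem_cons, Multiset.mem_singleton, hA12, hA13, hA23]
  have hle : ({A b1, A b2, A b3} : Multiset K) ≤ pF.roots := by
    rw [Multiset.le_iff_subset hnodup]
    intro x hx
    simp only [Multiset.insert_eq_cons, Multiset.mem_cons, Multiset.mem_singleton] at hx
    rcases hx with h | h | h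
    · rw [h]; exact hmem b1 hc1
    · rw [h]; exact hmem b2 hc2
    · rw [h]; exact hmem b3 hc3
  have hFroots : pF.roots = {A b1, A b2, A b3} :=
    (Multiset.eq_of_le_of_card_le hle (by rw [hcardF]; simp)).symm
  -- conclude
  rw [hrootsG, hrootsF, hb123, hFroots]
  simp only [Multiset.insert_eq_cons, Multiset.map_cons, Multiset.map_singleton]
  rw [hGev b1, hGev b2, hGev b3, hFev (A b1), hFev (A b2), hFev (A b3)]
  rw [hval b1 hc1, hval b2 hc2, hval b3 hc3]
end

section
/- For u ∈ ℚ*, if (u+3)³(u+27)/u ∈ ℤ (for instance when u parametrizes the j-invariant j(E) = (u+3)³(u+27)/u ∈ ℤ of an elliptic curve E: y² = x³ + Ax + B over ℚ) and u = ±3^k with k ∈ ℤ, then 0 ≤ k ≤ 6. -/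
theorem stmt17 (k : ℤ) (u : ℚ) (hu : u = 3 ^ k ∨ u = -(3 ^ k))
    (hint : ∃ n : ℤ, (u + 3) ^ 3 * (u + 27) / u = (n : ℚ)) :
    0 ≤ k ∧ k ≤ 6 := by
  obtain ⟨n, hn⟩ := hint
  obtain ⟨ε, hε, huε⟩ : ∃ ε : ℤ, (ε = 1 ∨ ε = -1) ∧ u = (ε : ℚ) * 3 ^ k := by
    rcases hu with h | h
    · exact ⟨1, Or.inl rfl, by rw [h]; push_cast; ring⟩
    · exact ⟨-1, Or.inr rfl, by rw [h]; push_cast; ring⟩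
  have hεQ : (ε : ℚ) ≠ 0 := by rcases hε with h | h <;> simp [h]
  have hu0 : u ≠ 0 := by
    rw [huε]
    exact mul_ne_zero hεQ (zpow_ne_zero _ (by norm_num))
  have heq : (u + 3) ^ 3 * (u + 27) = (n : ℚ) * u := by
    field_simp at hn
    linarith [hn]
  constructor
  · by_contra h
    push_neg at h
    obtain ⟨m, hm⟩ : ∃ m : ℕ, -k = (m + 1 : ℕ) := ⟨(-k).toNat - 1, by omega⟩
    have hk3 : (3 : ℚ) ^ k = ((3 : ℚ) ^ (m + 1))⁻¹ := by
      rw [show k = -((m + 1 : ℕ) : ℤ) by omega, zpow_neg, zpow_natCast]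
    rw [huε, hk3] at heq
    have h3 : ((3 : ℚ) ^ (m + 1)) ≠ 0 := by positivity
    field_simp at heq
    have keyQ : ((ε : ℚ) + 3 * 3 ^ (m + 1)) ^ 3 * (ε + 27 * 3 ^ (m + 1))
        = (n : ℚ) * ε * 3 ^ (3 * (m + 1)) := by
      apply mul_right_cancel₀ h3
      linear_combination (3 : ℚ) ^ (m + 1) * heq
    have key : (ε + 3 * 3 ^ (m + 1)) ^ 3 * (ε + 27 * 3 ^ (m + 1))
        = n * ε * 3 ^ (3 * (m + 1)) := by exact_mod_cast keyQ
    have hz := congrArg (Int.cast : ℤ → ZMod 3) key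
    push_cast at hz
    rw [show ((3 : ZMod 3)) = 0 from rfl, show ((27 : ZMod 3)) = 0 from by decide] at hz
    rw [zero_pow (by omega : 3 * (m + 1) ≠ 0)] at hz
    simp [pow_succ] at hz
    rcases hε with h | h <;> subst h <;> norm_num at hz
  · by_contra h
    push_neg at h
    obtain ⟨j, hj⟩ : ∃ j : ℕ, k = (j + 7 : ℕ) := ⟨k.toNat - 7, by omega⟩
    have hk3 : (3 : ℚ) ^ k = ((3 : ℚ) ^ (j + 7)) := by
      rw [hj, zpow_natCast]
    rw [huε, hk3] at heq
    have key : ((ε * 3 ^ (j + 7) + 3) ^ 3 * (ε * 3 ^ (j + 7) + 27) : ℤ)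
        = n * (ε * 3 ^ (j + 7)) := by exact_mod_cast heq
    have key2 : ((ε * 3 ^ (j + 6) + 1) ^ 3 * (ε * 3 ^ (j + 4) + 1) : ℤ)
        = n * ε * 3 ^ (j + 1) := by
      apply mul_left_cancel₀ (show ((3 : ℤ) ^ 6) ≠ 0 by norm_num)
      linear_combination key
    have hz := congrArg (Int.cast : ℤ → ZMod 3) key2
    push_cast at hz
    rw [show ((3 : ZMod 3)) = 0 from rfl] at hz
    rw [zero_pow (by omega : j + 6 ≠ 0), zero_pow (by omega : j + 4 ≠ 0),
      zero_pow (by omega : j + 1 ≠ 0)] at hz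
    norm_num at hz
end
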